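/- Let H : ℝ → ℝ be the Heaviside step function, H(x) = 1 for x > 0 and H(x) = 0 for x ≤ 0, and let σ > 0. Then: (i) the Gaussian smoothing H_σ(θ) = E_{ε ~ N(0,σ²)}[H(θ + ε)] equals Φ(θ/σ), where Φ is the standard normal CDF; (ii) H_σ is differentiable everywhere with strictly positive derivative H_σ′(θ) = (1/σ)·p(θ/σ) > 0, where p is the standard normal density; (iii) H is differentiable with derivative 0 at every x ≠ 0, so, defining the pointwise derivative D of H by D(x) = 0 for x ≠ 0 and D(0) = 0, one has E_{ε ~ N(0,σ²)}[D(θ + ε)] = 0 ≠ H_σ′(θ) for every θ ∈ ℝ. Hence the first-order (RGS-type) estimator that averages pointwise derivatives does not recover the gradient of the Gaussian smoothed loss for this discontinuous function. -/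

import Mathlib

open MeasureTheory ProbabilityTheory Real

/-- The Gaussian smoothing `L_σ(θ) = E_{ε ~ N(0,σ²)}[L (θ + ε)]` of a loss `L`. -/
noncomputable def gaussianSmoothing (L : ℝ → ℝ) (σ θ : ℝ) : ℝ :=
  ∫ ε, L (θ + ε) ∂(gaussianReal 0 ⟨σ ^ 2, sq_nonneg σ⟩)

/-- The standard normal density `p(t) = (1/√(2π)) · exp(−t²/2)`. -/
noncomputable def stdGaussianPDF (t : ℝ) : ℝ :=
  (Real.sqrt (2 * Real.pi))⁻¹ * Real.exp (-t ^ 2 / 2)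

/-- The standard normal CDF `Φ(x) = ∫_{−∞}^{x} p(t) dt`. -/
noncomputable def stdGaussianCDF (x : ℝ) : ℝ :=
  ∫ t in Set.Iic x, stdGaussianPDF t

/-- The Heaviside step function: `H(x) = 1` for `x > 0` and `H(x) = 0` for `x ≤ 0`. -/
noncomputable def heaviside (x : ℝ) : ℝ := if 0 < x then 1 else 0

/-- The pointwise derivative of the Heaviside function: `D(x) = 0` for `x ≠ 0`,
and (by convention) `D(0) = 0`. -/
def heavisideDeriv (_ : ℝ) : ℝ := 0

lemma stdGaussianPDF_eq : stdGaussianPDF = gaussianPDFReal 0 1 := by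
  funext x
  simp [stdGaussianPDF, gaussianPDFReal]

lemma stdGaussianPDF_pos (t : ℝ) : 0 < stdGaussianPDF t := by
  rw [stdGaussianPDF_eq]
  exact gaussianPDFReal_pos 0 1 t one_ne_zero

lemma integrable_stdGaussianPDF : Integrable stdGaussianPDF := by
  rw [stdGaussianPDF_eq]; exact integrable_gaussianPDFReal 0 1

lemma continuous_stdGaussianPDF : Continuous stdGaussianPDF := by
  unfold stdGaussianPDF; fun_prop

lemma hasDerivAt_stdGaussianCDF (x : ℝ) :
    HasDerivAt stdGaussianCDF (stdGaussianPDF x) x := by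
  have key : ∀ u : ℝ, stdGaussianCDF u =
      (∫ t in (0:ℝ)..u, stdGaussianPDF t) + stdGaussianCDF 0 := by
    intro u
    have := intervalIntegral.integral_Iic_sub_Iic
      (integrable_stdGaussianPDF.integrableOn (s := Set.Iic 0))
      (integrable_stdGaussianPDF.integrableOn (s := Set.Iic u))
    simp only [stdGaussianCDF]
    linarith
  have h : HasDerivAt (fun u : ℝ => (∫ t in (0:ℝ)..u, stdGaussianPDF t) + stdGaussianCDF 0)
      (stdGaussianPDF x) x :=
    ((continuous_stdGaussianPDF.integral_hasStrictDerivAt 0 x).hasDerivAt).add_const _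
  exact h.congr_of_eventuallyEq (Filter.Eventually.of_forall key)

lemma smoothing_eq (σ : ℝ) (hσ : 0 < σ) (θ : ℝ) :
    gaussianSmoothing heaviside σ θ = stdGaussianCDF (θ / σ) := by
  have hv : (⟨σ ^ 2, sq_nonneg σ⟩ : NNReal) ≠ 0 := by
    intro h
    have : σ ^ 2 = 0 := congrArg Subtype.val h
    nlinarith
  -- integrand is an indicator
  have h1 : gaussianSmoothing heaviside σ θ =
      ((gaussianReal 0 ⟨σ ^ 2, sq_nonneg σ⟩) (Set.Ioi (-θ))).toReal := by
    have : (fun ε => heaviside (θ + ε)) =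
        Set.indicator (Set.Ioi (-θ)) (fun _ => (1:ℝ)) := by
      funext ε
      by_cases h : -θ < ε
      · rw [Set.indicator_of_mem (Set.mem_Ioi.mpr h)]
        simp [heaviside, show (0:ℝ) < θ + ε by linarith]
      · rw [Set.indicator_of_notMem (by simpa using h)]
        simp [heaviside, show ¬ (0:ℝ) < θ + ε by simp at h; linarith]
    rw [gaussianSmoothing, this, integral_indicator_const _ measurableSet_Ioi]
    simp
    rfl
  -- measure computation
  have hmap : (gaussianReal 0 ⟨σ ^ 2, sq_nonneg σ⟩) =
      (gaussianReal 0 1).map (σ * ·) := by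
    rw [gaussianReal_map_const_mul σ]
    congr 1 <;> simp <;> rfl
  have h2 : (gaussianReal 0 ⟨σ ^ 2, sq_nonneg σ⟩) (Set.Ioi (-θ)) =
      (gaussianReal 0 1) (Set.Ioi (-(θ/σ))) := by
    rw [hmap, Measure.map_apply (measurable_const_mul σ) measurableSet_Ioi]
    congr 1
    ext x
    simp only [Set.mem_preimage, Set.mem_Ioi]
    rw [← neg_div, div_lt_iff₀ hσ, mul_comm]
  have hsym : (gaussianReal 0 1) (Set.Ioi (-(θ/σ))) =
      (gaussianReal 0 1) (Set.Iio (θ/σ)) := by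
    have hm : (gaussianReal 0 1).map ((-1 : ℝ) * ·) = gaussianReal 0 1 := by
      rw [gaussianReal_map_const_mul]
      congr 1 <;> simp
    conv_lhs => rw [← hm]
    rw [Measure.map_apply (measurable_const_mul _) measurableSet_Ioi]
    congr 1
    ext x
    simp only [Set.mem_preimage, Set.mem_Ioi, Set.mem_Iio]
    constructor <;> intro h <;> linarith
  have hpt : (gaussianReal 0 1) {θ/σ} = 0 :=
    gaussianReal_absolutelyContinuous 0 one_ne_zero (Real.volume_singleton)
  have h3 : (gaussianReal 0 1) (Set.Iio (θ/σ)) = (gaussianReal 0 1) (Set.Iic (θ/σ)) := by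
    exact measure_congr (Iio_ae_eq_Iic' hpt)
  have h4 : (gaussianReal 0 1) (Set.Iic (θ/σ)) =
      ENNReal.ofReal (∫ t in Set.Iic (θ/σ), stdGaussianPDF t) := by
    rw [gaussianReal_apply_eq_integral 0 one_ne_zero, stdGaussianPDF_eq]
  rw [h1, h2, hsym, h3, h4, ENNReal.toReal_ofReal, stdGaussianCDF]
  exact setIntegral_nonneg measurableSet_Iic fun t _ => (stdGaussianPDF_pos t).le


/-- For the Heaviside step function `H` and any `σ > 0`:
(i) its Gaussian smoothing is `H_σ(θ) = Φ(θ/σ)`;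
(ii) `H_σ` is differentiable everywhere with strictly positive derivative
`H_σ′(θ) = (1/σ)·p(θ/σ) > 0`;
(iii) `H` has derivative `0` at every `x ≠ 0`, and the pointwise-derivative
average satisfies `E_{ε ~ N(0,σ²)}[D(θ + ε)] = 0 ≠ H_σ′(θ)`. Hence the RGS-type
estimator fails to recover the gradient of the smoothed loss. -/
theorem heaviside_rgs_biased (σ : ℝ) (hσ : 0 < σ) (θ : ℝ) :
    gaussianSmoothing heaviside σ θ = stdGaussianCDF (θ / σ) ∧
    HasDerivAt (fun t : ℝ => gaussianSmoothing heaviside σ t)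
      ((1 / σ) * stdGaussianPDF (θ / σ)) θ ∧
    0 < (1 / σ) * stdGaussianPDF (θ / σ) ∧
    (∀ x : ℝ, x ≠ 0 → HasDerivAt heaviside 0 x) ∧
    (∫ ε, heavisideDeriv (θ + ε) ∂(gaussianReal 0 ⟨σ ^ 2, sq_nonneg σ⟩)) = 0 ∧
    (∫ ε, heavisideDeriv (θ + ε) ∂(gaussianReal 0 ⟨σ ^ 2, sq_nonneg σ⟩)) ≠
      (1 / σ) * stdGaussianPDF (θ / σ) := by
  have hpos : 0 < (1 / σ) * stdGaussianPDF (θ / σ) :=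
    mul_pos (by positivity) (stdGaussianPDF_pos _)
  have hint0 : (∫ ε, heavisideDeriv (θ + ε) ∂(gaussianReal 0 ⟨σ ^ 2, sq_nonneg σ⟩)) = 0 := by
    simp [heavisideDeriv]
  refine ⟨smoothing_eq σ hσ θ, ?_, hpos, ?_, hint0, by rw [hint0]; exact hpos.ne⟩
  · have h : HasDerivAt (fun t : ℝ => stdGaussianCDF (t / σ))
        ((1 / σ) * stdGaussianPDF (θ / σ)) θ := by
      have := (hasDerivAt_stdGaussianCDF (θ / σ)).comp θ ((hasDerivAt_id θ).div_const σ)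
      simpa [mul_comm, Function.comp_def] using this
    exact h.congr_of_eventuallyEq (Filter.Eventually.of_forall fun t => smoothing_eq σ hσ t)
  · intro x hx
    rcases hx.lt_or_gt with h | h
    · have : heaviside =ᶠ[nhds x] fun _ => (0:ℝ) :=
        Filter.eventuallyEq_of_mem (Iio_mem_nhds h) fun y hy => by
          simp [heaviside, not_lt.mpr (Set.mem_Iio.mp hy).le]
      exact (hasDerivAt_const x (0:ℝ)).congr_of_eventuallyEq this
    · have : heaviside =ᶠ[nhds x] fun _ => (1:ℝ) :=
        Filter.eventuallyEq_of_mem (Ioi_mem_nhds h) fun y hy => by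
          simp [heaviside, (Set.mem_Ioi.mp hy)]
      exact (hasDerivAt_const x (1:ℝ)).congr_of_eventuallyEq this
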